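/- Let q = α + iβ with α, β : ℝⁿ × ℝⁿ → ℝ smooth, and p_h = e^{-hq}. Then the Poisson bracket satisfies {conj(p_h), p_h} = 2i h² |p_h|² {α, β}, where |p_h|² = e^{-2hα}. -/

import Mathlib

/-- Partial derivative in the `j`-th `x`-coordinate of a function of `(x, ξ)`. -/
noncomputable def pdx {n : ℕ} {E : Type*} [NormedAddCommGroup E] [NormedSpace ℝ E]
    (f : (Fin n → ℝ) → (Fin n → ℝ) → E) (j : Fin n) (x ξ : Fin n → ℝ) : E :=
  deriv (fun t => f (Function.update x j t) ξ) (x j)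

/-- Partial derivative in the `j`-th `ξ`-coordinate of a function of `(x, ξ)`. -/
noncomputable def pdxi {n : ℕ} {E : Type*} [NormedAddCommGroup E] [NormedSpace ℝ E]
    (f : (Fin n → ℝ) → (Fin n → ℝ) → E) (j : Fin n) (x ξ : Fin n → ℝ) : E :=
  deriv (fun t => f x (Function.update ξ j t)) (ξ j)

lemma lineX {n : ℕ} (f : (Fin n → ℝ) → (Fin n → ℝ) → ℝ)
    (hf : ContDiff ℝ (⊤ : ℕ∞) (fun p : (Fin n → ℝ) × (Fin n → ℝ) => f p.1 p.2))
    (j : Fin n) (x ξ : Fin n → ℝ) :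
    HasDerivAt (fun t => f (Function.update x j t) ξ) (pdx f j x ξ) (x j) := by
  have hg : DifferentiableAt ℝ (fun t : ℝ => ((Function.update x j t : Fin n → ℝ), ξ)) (x j) :=
    DifferentiableAt.prodMk ((hasDerivAt_update x j (x j)).differentiableAt) (differentiableAt_const ξ)
  have hd : DifferentiableAt ℝ (fun t => f (Function.update x j t) ξ) (x j) := by
    have := DifferentiableAt.comp (𝕜 := ℝ) (x j)
      (hf.differentiable (by simp) (Function.update x j (x j), ξ)) hg
    exact this
  exact hd.hasDerivAt

lemma lineXi {n : ℕ} (f : (Fin n → ℝ) → (Fin n → ℝ) → ℝ)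
    (hf : ContDiff ℝ (⊤ : ℕ∞) (fun p : (Fin n → ℝ) × (Fin n → ℝ) => f p.1 p.2))
    (j : Fin n) (x ξ : Fin n → ℝ) :
    HasDerivAt (fun t => f x (Function.update ξ j t)) (pdxi f j x ξ) (ξ j) := by
  have hg : DifferentiableAt ℝ (fun t : ℝ => (x, (Function.update ξ j t : Fin n → ℝ))) (ξ j) :=
    DifferentiableAt.prodMk (differentiableAt_const x) ((hasDerivAt_update ξ j (ξ j)).differentiableAt)
  have hd : DifferentiableAt ℝ (fun t => f x (Function.update ξ j t)) (ξ j) := by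
    have := DifferentiableAt.comp (𝕜 := ℝ) (ξ j)
      (hf.differentiable (by simp) (x, Function.update ξ j (ξ j))) hg
    exact this
  exact hd.hasDerivAt

lemma expDeriv {a b : ℝ → ℝ} {A B t : ℝ} (ha : HasDerivAt a A t) (hb : HasDerivAt b B t)
    (h : ℝ) (ε : ℂ) :
    HasDerivAt (fun u => Complex.exp (-(h:ℂ) * ((a u : ℂ) + ε * (b u : ℂ))))
      (Complex.exp (-(h:ℂ) * ((a t : ℂ) + ε * (b t : ℂ))) * (-(h:ℂ) * ((A:ℂ) + ε * (B:ℂ)))) t :=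
  ((ha.ofReal_comp.add (hb.ofReal_comp.const_mul ε)).const_mul (-(h:ℂ))).cexp

theorem stmt_4 (n : ℕ) (α β : (Fin n → ℝ) → (Fin n → ℝ) → ℝ)
    (hα : ContDiff ℝ (⊤ : ℕ∞) (fun p : (Fin n → ℝ) × (Fin n → ℝ) => α p.1 p.2))
    (hβ : ContDiff ℝ (⊤ : ℕ∞) (fun p : (Fin n → ℝ) × (Fin n → ℝ) => β p.1 p.2))
    (h : ℝ) (hh : 0 ≤ h)
    (q : (Fin n → ℝ) → (Fin n → ℝ) → ℂ)
    (hq : ∀ x ξ, q x ξ = (α x ξ : ℂ) + Complex.I * (β x ξ : ℂ))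
    (p : (Fin n → ℝ) → (Fin n → ℝ) → ℂ)
    (hp : ∀ x ξ, p x ξ = Complex.exp (-(h : ℂ) * q x ξ)) :
    ∀ x ξ : Fin n → ℝ,
      ∑ j : Fin n,
        (pdxi (fun x ξ => starRingEnd ℂ (p x ξ)) j x ξ * pdx p j x ξ
          - pdx (fun x ξ => starRingEnd ℂ (p x ξ)) j x ξ * pdxi p j x ξ)
      = 2 * Complex.I * (h : ℂ) ^ 2 * (Real.exp (-2 * h * α x ξ) : ℂ) *
          ((∑ j : Fin n,
            (pdxi α j x ξ * pdx β j x ξ - pdx α j x ξ * pdxi β j x ξ) : ℝ) : ℂ) := by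
  intro x ξ
  set Ep : ℂ := Complex.exp (-(h:ℂ) * ((α x ξ : ℂ) + Complex.I * (β x ξ : ℂ))) with hEp
  set Em : ℂ := Complex.exp (-(h:ℂ) * ((α x ξ : ℂ) + -Complex.I * (β x ξ : ℂ))) with hEm
  have e1 : ∀ j, pdx p j x ξ
      = Ep * (-(h:ℂ) * (((pdx α j x ξ : ℝ) : ℂ) + Complex.I * ((pdx β j x ξ : ℝ) : ℂ))) := by
    intro j
    have hd := expDeriv (lineX α hα j x ξ) (lineX β hβ j x ξ) h Complex.I
    have heq : (fun t => p (Function.update x j t) ξ)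
        = fun u => Complex.exp (-(h:ℂ) * ((α (Function.update x j u) ξ : ℂ)
            + Complex.I * (β (Function.update x j u) ξ : ℂ))) :=
      funext fun u => by rw [hp, hq]
    rw [pdx, heq, hd.deriv, Function.update_eq_self, hEp]
  have e2 : ∀ j, pdxi p j x ξ
      = Ep * (-(h:ℂ) * (((pdxi α j x ξ : ℝ) : ℂ) + Complex.I * ((pdxi β j x ξ : ℝ) : ℂ))) := by
    intro j
    have hd := expDeriv (lineXi α hα j x ξ) (lineXi β hβ j x ξ) h Complex.I
    have heq : (fun t => p x (Function.update ξ j t))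
        = fun u => Complex.exp (-(h:ℂ) * ((α x (Function.update ξ j u) : ℂ)
            + Complex.I * (β x (Function.update ξ j u) : ℂ))) :=
      funext fun u => by rw [hp, hq]
    rw [pdxi, heq, hd.deriv, Function.update_eq_self, hEp]
  have conj_eq : ∀ y η, (starRingEnd ℂ) (p y η)
      = Complex.exp (-(h:ℂ) * ((α y η : ℂ) + -Complex.I * (β y η : ℂ))) := by
    intro y η
    rw [hp, hq, ← Complex.exp_conj]
    congr 1
    simp [map_mul, map_add, Complex.conj_ofReal, Complex.conj_I]
  have e3 : ∀ j, pdx (fun x ξ => starRingEnd ℂ (p x ξ)) j x ξ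
      = Em * (-(h:ℂ) * (((pdx α j x ξ : ℝ) : ℂ) + -Complex.I * ((pdx β j x ξ : ℝ) : ℂ))) := by
    intro j
    have hd := expDeriv (lineX α hα j x ξ) (lineX β hβ j x ξ) h (-Complex.I)
    have heq : (fun t => (starRingEnd ℂ) (p (Function.update x j t) ξ))
        = fun u => Complex.exp (-(h:ℂ) * ((α (Function.update x j u) ξ : ℂ)
            + -Complex.I * (β (Function.update x j u) ξ : ℂ))) :=
      funext fun u => conj_eq _ _
    rw [pdx, heq, hd.deriv, Function.update_eq_self, hEm]
  have e4 : ∀ j, pdxi (fun x ξ => starRingEnd ℂ (p x ξ)) j x ξ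
      = Em * (-(h:ℂ) * (((pdxi α j x ξ : ℝ) : ℂ) + -Complex.I * ((pdxi β j x ξ : ℝ) : ℂ))) := by
    intro j
    have hd := expDeriv (lineXi α hα j x ξ) (lineXi β hβ j x ξ) h (-Complex.I)
    have heq : (fun t => (starRingEnd ℂ) (p x (Function.update ξ j t)))
        = fun u => Complex.exp (-(h:ℂ) * ((α x (Function.update ξ j u) : ℂ)
            + -Complex.I * (β x (Function.update ξ j u) : ℂ))) :=
      funext fun u => conj_eq _ _
    rw [pdxi, heq, hd.deriv, Function.update_eq_self, hEm]
  have hpp : Em * Ep = (Real.exp (-2 * h * α x ξ) : ℂ) := by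
    rw [hEm, hEp, ← Complex.exp_add, Complex.ofReal_exp]
    congr 1
    push_cast
    ring
  calc
    ∑ j : Fin n,
        (pdxi (fun x ξ => starRingEnd ℂ (p x ξ)) j x ξ * pdx p j x ξ
          - pdx (fun x ξ => starRingEnd ℂ (p x ξ)) j x ξ * pdxi p j x ξ)
      = ∑ j : Fin n, (2 * Complex.I * (h:ℂ)^2 * (Em * Ep))
          * ((pdxi α j x ξ * pdx β j x ξ - pdx α j x ξ * pdxi β j x ξ : ℝ) : ℂ) := by
        refine Finset.sum_congr rfl fun j _ => ?_
        rw [e1 j, e2 j, e3 j, e4 j]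
        push_cast
        ring
    _ = 2 * Complex.I * (h : ℂ) ^ 2 * (Real.exp (-2 * h * α x ξ) : ℂ) *
          ((∑ j : Fin n,
            (pdxi α j x ξ * pdx β j x ξ - pdx α j x ξ * pdxi β j x ξ) : ℝ) : ℂ) := by
        rw [← Finset.mul_sum, hpp]
        push_cast
        ring
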